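/- For γ = 2 (so U = U₀/det F is homogeneous of degree −2 in the entries of F), any solution of F̈ᵢₖ + ∂U/∂Fᵢₖ + 2ω(LḞ)ᵢₖ − ω²Fᵢₖ = 0 satisfies G̈/2 = 2(Ẽ + ωA), where G = Σᵢₖ Fᵢₖ², Ẽ = ½Σ(Ḟᵢₖ)² + U − ½ω²G, and A = J + ωG; hence G(t) = 2(Ẽ + ωA)t² + k₁t + k₀ for some constants k₀, k₁. -/

import Mathlib

open Matrix
attribute [local instance] Matrix.normedAddCommGroup Matrix.normedSpace

/-!
The energy `E = ½|Ḟ|² + U + ½ω²G + ωJ = Ẽ + ωA` is conserved along solutions. Differentiating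
`G = |F|²` twice gives `G̈/2 = |Ḟ|² + ⟨F, F̈⟩`; substituting the equation of motion, Euler's identity
`⟨F, ∂U/∂F⟩ = −2U` turns the potential term into `2U`, and the Coriolis term into `2ωJ`, so that
`G̈/2 = 2E`. A function with constant second derivative is a quadratic polynomial.
-/

theorem hasDerivAt_matrix_apply {m n : Type*} [Fintype m] [Fintype n]
    {F : ℝ → Matrix m n ℝ} {F' : Matrix m n ℝ} {t : ℝ} (h : HasDerivAt F F' t) (i : m) (j : n) :
    HasDerivAt (fun s => F s i j) (F' i j) t :=
  hasDerivAt_pi.mp (hasDerivAt_pi.mp h i) j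

theorem eq_quadratic_of_hasDerivAt {f f' : ℝ → ℝ} {c : ℝ} (hf : ∀ t, HasDerivAt f (f' t) t)
    (hf' : ∀ t, HasDerivAt f' c t) (t : ℝ) : f t = c / 2 * t ^ 2 + f' 0 * t + f 0 := by
  have hlin : ∀ s, f' s = c * s + f' 0 := by
    intro s
    have hd : ∀ s, HasDerivAt (fun s => f' s - c * s) 0 s := fun s =>
      ((hf' s).sub ((hasDerivAt_id s).const_mul c)).congr_deriv (by simp)
    have := is_const_of_deriv_eq_zero (fun s => (hd s).differentiableAt) (fun s => (hd s).deriv) s 0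
    simp only [mul_zero, sub_zero] at this
    linarith
  have hd : ∀ s, HasDerivAt (fun s => f s - (c / 2 * s ^ 2 + f' 0 * s)) 0 s := fun s =>
    ((hf s).sub ((((hasDerivAt_pow 2 s).const_mul (c / 2))).add
      ((hasDerivAt_id s).const_mul (f' 0)))).congr_deriv (by rw [hlin s]; simp only [Nat.cast_ofNat, mul_one]; ring)
  have := is_const_of_deriv_eq_zero (fun s => (hd s).differentiableAt) (fun s => (hd s).deriv) t 0
  simp only [ne_eq, OfNat.ofNat_ne_zero, not_false_eq_true, zero_pow, mul_zero, add_zero,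
    sub_zero] at this
  linarith

namespace AffineMotion

abbrev Mat2 := Matrix (Fin 2) (Fin 2) ℝ

def frobInner (A B : Mat2) : ℝ :=
  A 0 0 * B 0 0 + A 0 1 * B 0 1 + A 1 0 * B 1 0 + A 1 1 * B 1 1

def cofactor (A : Mat2) : Mat2 :=
  !![A 1 1, -(A 1 0); -(A 0 1), A 0 0]

def angularMomentum (A A' : Mat2) : ℝ :=
  A 0 0 * A' 1 0 + A 0 1 * A' 1 1 - A 1 0 * A' 0 0 - A 1 1 * A' 0 1

noncomputable def energy (U₀ ω : ℝ) (A A' : Mat2) : ℝ :=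
  frobInner A' A' / 2 + U₀ / A.det + ω ^ 2 / 2 * frobInner A A + ω * angularMomentum A A'

/-- `F̈ + ∂U/∂F + 2ωLḞ − ω²F = 0` at one instant, for `U = U₀ / det F`, whose gradient is
`−(U₀ / (det F)²) • cofactor F`. -/
def EquationOfMotion (U₀ ω : ℝ) (A A' A'' : Mat2) : Prop :=
  A'' + (-(U₀ / A.det ^ 2)) • cofactor A + (2 * ω) • (!![0, -1; 1, 0] * A') - ω ^ 2 • A = 0

theorem frobInner_cofactor_self (A : Mat2) : frobInner (cofactor A) A = 2 * A.det := by
  simp only [frobInner, cofactor, of_apply, cons_val', cons_val_zero, cons_val_fin_one,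
    cons_val_one, det_fin_two]
  ring

section Derivatives

variable {F G : ℝ → Mat2} {F' G' : Mat2} {t : ℝ}

theorem hasDerivAt_frobInner (hF : HasDerivAt F F' t) (hG : HasDerivAt G G' t) :
    HasDerivAt (fun s => frobInner (F s) (G s)) (frobInner F' (G t) + frobInner (F t) G') t := by
  have e := hasDerivAt_matrix_apply hF
  have e' := hasDerivAt_matrix_apply hG
  exact (((((e 0 0).mul (e' 0 0)).add ((e 0 1).mul (e' 0 1))).add ((e 1 0).mul (e' 1 0))).add
    ((e 1 1).mul (e' 1 1))).congr_deriv (by simp only [frobInner]; ring)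

theorem hasDerivAt_angularMomentum (hF : HasDerivAt F F' t) (hG : HasDerivAt G G' t) :
    HasDerivAt (fun s => angularMomentum (F s) (G s))
      (angularMomentum F' (G t) + angularMomentum (F t) G') t := by
  have e := hasDerivAt_matrix_apply hF
  have e' := hasDerivAt_matrix_apply hG
  exact (((((e 0 0).mul (e' 1 0)).add ((e 0 1).mul (e' 1 1))).sub ((e 1 0).mul (e' 0 0))).sub
    ((e 1 1).mul (e' 0 1))).congr_deriv (by simp only [angularMomentum]; ring)

theorem hasDerivAt_det_fin_two (hF : HasDerivAt F F' t) :
    HasDerivAt (fun s => (F s).det) (frobInner (cofactor (F t)) F') t := by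
  have e := hasDerivAt_matrix_apply hF
  simp only [det_fin_two]
  exact (((e 0 0).mul (e 1 1)).sub ((e 0 1).mul (e 1 0))).congr_deriv
    (by simp [frobInner, cofactor]; ring)

end Derivatives

section Pointwise

variable {U₀ ω : ℝ} {A A' A'' : Mat2}

theorem EquationOfMotion.entries (h : EquationOfMotion U₀ ω A A' A'') :
    A'' 0 0 = U₀ / A.det ^ 2 * A 1 1 + 2 * ω * A' 1 0 + ω ^ 2 * A 0 0 ∧
    A'' 0 1 = -(U₀ / A.det ^ 2 * A 1 0) + 2 * ω * A' 1 1 + ω ^ 2 * A 0 1 ∧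
    A'' 1 0 = -(U₀ / A.det ^ 2 * A 0 1) - 2 * ω * A' 0 0 + ω ^ 2 * A 1 0 ∧
    A'' 1 1 = U₀ / A.det ^ 2 * A 0 0 - 2 * ω * A' 0 1 + ω ^ 2 * A 1 1 := by
  have h00 := congrFun (congrFun h 0) 0
  have h01 := congrFun (congrFun h 0) 1
  have h10 := congrFun (congrFun h 1) 0
  have h11 := congrFun (congrFun h 1) 1
  simp only [cofactor, Matrix.add_apply, Matrix.sub_apply, Matrix.smul_apply, mul_apply,
    Fin.sum_univ_two, smul_eq_mul, Matrix.zero_apply, of_apply, cons_val', cons_val_zero,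
    cons_val_one, empty_val', cons_val_fin_one] at h00 h01 h10 h11
  exact ⟨by linarith, by linarith, by linarith, by linarith⟩

/-- The time derivative of `energy` along a solution, in the form the product and quotient rules
produce it. -/
theorem EquationOfMotion.energy_deriv_eq_zero (h : EquationOfMotion U₀ ω A A' A'') :
    (frobInner A'' A' + frobInner A' A'') / 2 +
        (0 * A.det - U₀ * frobInner (cofactor A) A') / A.det ^ 2 +
        ω ^ 2 / 2 * (frobInner A' A + frobInner A A') +
        ω * (angularMomentum A' A' + angularMomentum A A'') = 0 := by
  obtain ⟨h00, h01, h10, h11⟩ := h.entries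
  simp only [frobInner, angularMomentum, cofactor, of_apply, cons_val', cons_val_zero,
    cons_val_one, empty_val', cons_val_fin_one]
  linear_combination (A' 0 0 - ω * A 1 0) * h00 + (A' 0 1 - ω * A 1 1) * h01 +
    (A' 1 0 + ω * A 0 0) * h10 + (A' 1 1 + ω * A 0 1) * h11

/-- The virial identity: `½ G̈ = |Ḟ|² + ⟨F, F̈⟩ = 2E`. -/
theorem EquationOfMotion.virial (h : EquationOfMotion U₀ ω A A' A'') :
    frobInner A' A' + frobInner A A'' = 2 * energy U₀ ω A A' := by
  obtain ⟨h00, h01, h10, h11⟩ := h.entries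
  have hpot : U₀ / A.det ^ 2 * frobInner (cofactor A) A = 2 * (U₀ / A.det) := by
    rw [frobInner_cofactor_self]
    rcases eq_or_ne A.det 0 with hA | hA
    · simp [hA]
    · field_simp
  simp only [energy, frobInner, angularMomentum, cofactor, of_apply, cons_val', cons_val_zero,
    cons_val_one, empty_val', cons_val_fin_one] at hpot ⊢
  linear_combination A 0 0 * h00 + A 0 1 * h01 + A 1 0 * h10 + A 1 1 * h11 + hpot

end Pointwise

section Solution

variable {U₀ ω : ℝ} {F F' F'' : ℝ → Mat2}

theorem energy_eq_of_equationOfMotion (hF : ∀ t, HasDerivAt F (F' t) t)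
    (hF' : ∀ t, HasDerivAt F' (F'' t) t) (hdet : ∀ t, (F t).det ≠ 0)
    (hode : ∀ t, EquationOfMotion U₀ ω (F t) (F' t) (F'' t)) (t : ℝ) :
    energy U₀ ω (F t) (F' t) = energy U₀ ω (F 0) (F' 0) := by
  have hd : ∀ s, HasDerivAt (fun s => energy U₀ ω (F s) (F' s)) 0 s := fun s =>
    (((((hasDerivAt_frobInner (hF' s) (hF' s)).div_const 2).add
      ((hasDerivAt_const s U₀).div (hasDerivAt_det_fin_two (hF s)) (hdet s))).add
      ((hasDerivAt_frobInner (hF s) (hF s)).const_mul (ω ^ 2 / 2))).add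
      ((hasDerivAt_angularMomentum (hF s) (hF' s)).const_mul ω)).congr_deriv
      (hode s).energy_deriv_eq_zero
  exact is_const_of_deriv_eq_zero (fun s => (hd s).differentiableAt) (fun s => (hd s).deriv) t 0

end Solution

end AffineMotion

open AffineMotion in
theorem G_quadratic_in_time_general (U₀ ω : ℝ)
    (F F' F'' : ℝ → Matrix (Fin 2) (Fin 2) ℝ)
    (hdet : ∀ t, 0 < (F t).det)
    (hF : ∀ t, HasDerivAt F (F' t) t)
    (hF' : ∀ t, HasDerivAt F' (F'' t) t)
    (hode : ∀ t : ℝ,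
      F'' t + (-(U₀ / (F t).det ^ 2)) •
          !![F t 1 1, -(F t 1 0); -(F t 0 1), F t 0 0] +
        (2 * ω) • (!![0, -1; 1, 0] * F' t) - ω ^ 2 • F t = 0) :
    let G : ℝ → ℝ := fun t =>
      (F t 0 0) ^ 2 + (F t 0 1) ^ 2 + (F t 1 0) ^ 2 + (F t 1 1) ^ 2
    let J : ℝ → ℝ := fun t =>
      F t 0 0 * F' t 1 0 + F t 0 1 * F' t 1 1 - F t 1 0 * F' t 0 0 - F t 1 1 * F' t 0 1
    let Etil : ℝ → ℝ := fun t =>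
      (1 / 2) * ((F' t 0 0) ^ 2 + (F' t 0 1) ^ 2 + (F' t 1 0) ^ 2 + (F' t 1 1) ^ 2) +
        U₀ / (F t).det - (1 / 2) * ω ^ 2 * G t
    let A : ℝ → ℝ := fun t => J t + ω * G t
    (∀ t : ℝ, deriv (deriv G) t / 2 = 2 * (Etil t + ω * A t)) ∧
    ∃ k₀ k₁ : ℝ, ∀ t : ℝ,
      G t = 2 * (Etil 0 + ω * A 0) * t ^ 2 + k₁ * t + k₀ := by
  intro G J Etil A
  have hmotion : ∀ t, EquationOfMotion U₀ ω (F t) (F' t) (F'' t) := hode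
  have hE : ∀ t, Etil t + ω * A t = energy U₀ ω (F t) (F' t) := fun t => by
    simp only [Etil, A, J, G, energy, frobInner, angularMomentum]; ring
  have hG : G = fun t => frobInner (F t) (F t) := by
    funext t; simp only [G, frobInner]; ring
  have hG' (t : ℝ) : HasDerivAt G (2 * frobInner (F t) (F' t)) t := by
    rw [hG]
    exact (hasDerivAt_frobInner (hF t) (hF t)).congr_deriv (by simp only [frobInner]; ring)
  have hG'' (t : ℝ) : HasDerivAt (fun s => 2 * frobInner (F s) (F' s))
      (4 * energy U₀ ω (F t) (F' t)) t :=
    ((hasDerivAt_frobInner (hF t) (hF' t)).const_mul 2).congr_deriv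
      (by rw [(hmotion t).virial]; ring)
  have hconst := energy_eq_of_equationOfMotion hF hF' (fun t => (hdet t).ne') hmotion
  refine ⟨fun t => ?_, ⟨G 0, 2 * frobInner (F 0) (F' 0), fun t => ?_⟩⟩
  · rw [funext fun s => (hG' s).deriv, (hG'' t).deriv, hE]
    ring
  · rw [eq_quadratic_of_hasDerivAt hG' (fun s => (hconst s ▸ hG'' s)) t, hE]
    ring

/-- For `γ = 2` (so `U = U₀/det F` is homogeneous of degree `−2` in the entries of `F`,
with `∂U/∂Fᵢₖ = −(U₀/(det F)²)·cofᵢₖ(F)`), any solution of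
`F̈ᵢₖ + ∂U/∂Fᵢₖ + 2ω(LḞ)ᵢₖ − ω²Fᵢₖ = 0` satisfies `G̈/2 = 2(Ẽ + ωA)`, where
`G = Σᵢₖ Fᵢₖ²`, `Ẽ = ½Σ(Ḟᵢₖ)² + U − ½ω²G`, `J = F₁₁Ḟ₂₁ + F₁₂Ḟ₂₂ − F₂₁Ḟ₁₁ − F₂₂Ḟ₁₂`
and `A = J + ωG`; hence `G(t) = 2(Ẽ + ωA)t² + k₁t + k₀` for some constants `k₀, k₁`. -/
theorem G_quadratic_in_time (U₀ ω : ℝ) (hU₀ : 0 < U₀)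
    (F F' F'' : ℝ → Matrix (Fin 2) (Fin 2) ℝ)
    (hdet : ∀ t, 0 < (F t).det)
    (hF : ∀ t, HasDerivAt F (F' t) t)
    (hF' : ∀ t, HasDerivAt F' (F'' t) t)
    (hode : ∀ t : ℝ,
      F'' t + (-(U₀ / (F t).det ^ 2)) •
          !![F t 1 1, -(F t 1 0); -(F t 0 1), F t 0 0] +
        (2 * ω) • (!![0, -1; 1, 0] * F' t) - ω ^ 2 • F t = 0) :
    let G : ℝ → ℝ := fun t =>
      (F t 0 0) ^ 2 + (F t 0 1) ^ 2 + (F t 1 0) ^ 2 + (F t 1 1) ^ 2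
    let J : ℝ → ℝ := fun t =>
      F t 0 0 * F' t 1 0 + F t 0 1 * F' t 1 1 - F t 1 0 * F' t 0 0 - F t 1 1 * F' t 0 1
    let Etil : ℝ → ℝ := fun t =>
      (1 / 2) * ((F' t 0 0) ^ 2 + (F' t 0 1) ^ 2 + (F' t 1 0) ^ 2 + (F' t 1 1) ^ 2) +
        U₀ / (F t).det - (1 / 2) * ω ^ 2 * G t
    let A : ℝ → ℝ := fun t => J t + ω * G t
    (∀ t : ℝ, deriv (deriv G) t / 2 = 2 * (Etil t + ω * A t)) ∧
    ∃ k₀ k₁ : ℝ, ∀ t : ℝ,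
      G t = 2 * (Etil 0 + ω * A 0) * t ^ 2 + k₁ * t + k₀ :=
  G_quadratic_in_time_general U₀ ω F F' F'' hdet hF hF' hode
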